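/- arXiv:2505.22820 — 7 statements merged into one kernel-verified Lean document; each statement's English description precedes it below -/
import Mathlib

section
/- (Neyman orthogonality of the orthogonal loss, Lemma 3.1.) Suppose Y, T : Ω → ℝ are random variables, r_o, t_o : E → ℝ are bounded measurable functions such that E[Y | X] = r_o(X)·t_o(X) almost surely and E[T | X] = t_o(X) almost surely, and all expectations below are finite. Then for all bounded measurable functions r, 𝔯, t : E → ℝ, E[ 2·(−Y + T·r_o(X))·(t(X) − t_o(X))·(r(X) − r_o(X)) + 2·(T·t_o(X) − t_o(X)²)·(𝔯(X) − r_o(X))·(r(X) − r_o(X)) ] = 0. Equivalently, the mixed directional derivative D_g D_r L^ortho(r_o, g_o)[r − r_o, g − g_o] of the population loss L^ortho(r; 𝔯, t) = E[(Y − (T − t(X))·𝔯(X) − r(X)·t(X))²] vanishes at the true nuisance pair g_o = (r_o, t_o) in all directions (r − r_o, g − g_o). -/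
/-!
Writing `εY = Y - r_o(X) t_o(X)` and `εT = T - t_o(X)`, the integrand equals
`g₁(X) εY + g₂(X) εT` with bounded weights `g₁ = -2 (t - t_o)(r - r_o)` and
`g₂ = 2 (r - r_o)(r_o (t - t_o) + t_o (𝔯 - r_o))`. Both residuals have zero conditional mean
given `X`, and a bounded `σ(X)`-measurable weight pulls out of the conditional expectation, so
each term has zero expectation.
-/

open MeasureTheory
open scoped ENNReal

section CondExp

variable {Ω : Type*} {m mΩ : MeasurableSpace Ω} {μ : Measure Ω}

theorem condExp_sub_ae_eq_zero (hm : m ≤ mΩ) [SigmaFinite (μ.trim hm)] {Y φ : Ω → ℝ}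
    (hY : Integrable Y μ) (hφ : StronglyMeasurable[m] φ) (hφi : Integrable φ μ)
    (hYφ : μ[Y | m] =ᵐ[μ] φ) : μ[Y - φ | m] =ᵐ[μ] 0 := by
  filter_upwards [condExp_sub hY hφi m, hYφ] with ω hsub hω
  rw [hsub, Pi.sub_apply, hω, condExp_of_stronglyMeasurable hm hφ hφi, Pi.zero_apply, sub_self]

theorem integral_mul_eq_zero_of_condExp_ae_eq_zero (hm : m ≤ mΩ) [SigmaFinite (μ.trim hm)]
    {g Z : Ω → ℝ} (hg : StronglyMeasurable[m] g) (hZ : Integrable Z μ)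
    (hgZ : Integrable (fun ω => g ω * Z ω) μ) (hZ0 : μ[Z | m] =ᵐ[μ] 0) :
    ∫ ω, g ω * Z ω ∂μ = 0 := by
  calc ∫ ω, g ω * Z ω ∂μ = ∫ ω, (μ[g * Z | m]) ω ∂μ := (integral_condExp hm).symm
    _ = ∫ ω, g ω * (μ[Z | m]) ω ∂μ :=
        integral_congr_ae (condExp_mul_of_stronglyMeasurable_left hg hgZ hZ)
    _ = 0 := by
        rw [integral_congr_ae (hZ0.mono fun ω hω => by rw [hω, Pi.zero_apply, mul_zero])]
        exact integral_zero _ _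

theorem integral_mul_sub_eq_zero_of_condExp_ae_eq [IsFiniteMeasure μ] (hm : m ≤ mΩ)
    {g Y φ : Ω → ℝ} (hg : StronglyMeasurable[m] g) (hgB : MemLp g ∞ μ)
    (hY : Integrable Y μ) (hφ : StronglyMeasurable[m] φ) (hφi : Integrable φ μ)
    (hYφ : μ[Y | m] =ᵐ[μ] φ) :
    ∫ ω, g ω * (Y ω - φ ω) ∂μ = 0 :=
  integral_mul_eq_zero_of_condExp_ae_eq_zero hm hg (hY.sub hφi)
    ((hY.sub hφi).mul_of_top_right hgB) (condExp_sub_ae_eq_zero hm hY hφ hφi hYφ)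

end CondExp

theorem memLp_top_comp_of_abs_le {Ω E : Type*} [MeasurableSpace Ω] [MeasurableSpace E]
    {μ : Measure Ω} {X : Ω → E} (hX : Measurable X) {f : E → ℝ} (hf : Measurable f)
    (hB : ∃ C, ∀ x, |f x| ≤ C) : MemLp (fun ω => f (X ω)) ∞ μ := by
  obtain ⟨C, hC⟩ := hB
  exact memLp_top_of_bound (hf.comp hX).aestronglyMeasurable C (.of_forall fun ω => hC (X ω))

theorem neyman_orthogonality_ortho_loss_general
    {Ω : Type*} [MeasurableSpace Ω] {μ : Measure Ω} [IsProbabilityMeasure μ]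
    {E : Type*} [mE : MeasurableSpace E] (X : Ω → E) (hX : Measurable X)
    (Y T : Ω → ℝ)
    (hYint : Integrable Y μ) (hTint : Integrable T μ)
    (r_o t_o : E → ℝ) (hro : Measurable r_o) (hto : Measurable t_o)
    (hroB : ∃ C, ∀ x, |r_o x| ≤ C) (htoB : ∃ C, ∀ x, |t_o x| ≤ C)
    (hYcond : μ[Y | MeasurableSpace.comap X mE] =ᵐ[μ]
      fun ω => r_o (X ω) * t_o (X ω))
    (hTcond : μ[T | MeasurableSpace.comap X mE] =ᵐ[μ]
      fun ω => t_o (X ω))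
    (r 𝔯 t : E → ℝ) (hr : Measurable r) (h𝔯 : Measurable 𝔯) (ht : Measurable t)
    (hrB : ∃ C, ∀ x, |r x| ≤ C) (h𝔯B : ∃ C, ∀ x, |𝔯 x| ≤ C) (htB : ∃ C, ∀ x, |t x| ≤ C) :
    ∫ ω, (2 * (-Y ω + T ω * r_o (X ω)) * (t (X ω) - t_o (X ω)) * (r (X ω) - r_o (X ω)) +
      2 * (T ω * t_o (X ω) - t_o (X ω) ^ 2) * (𝔯 (X ω) - r_o (X ω)) * (r (X ω) - r_o (X ω)))
      ∂μ = 0 := by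
  have hm := hX.comap_le
  have hXm : Measurable[mE.comap X] X := comap_measurable X
  have bdd {f : E → ℝ} (hf : Measurable f) (hB : ∃ C, ∀ x, |f x| ≤ C) :
      MemLp (fun ω => f (X ω)) ∞ μ := memLp_top_comp_of_abs_le hX hf hB
  have hφY := ((bdd hto htoB).mul' (bdd hro hroB)).integrable le_top
  have hφT := (bdd hto htoB).integrable le_top
  set g₁ : Ω → ℝ := fun ω => -2 * ((t (X ω) - t_o (X ω)) * (r (X ω) - r_o (X ω)))
  set g₂ : Ω → ℝ := fun ω => 2 * ((r (X ω) - r_o (X ω)) *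
    (r_o (X ω) * (t (X ω) - t_o (X ω)) + t_o (X ω) * (𝔯 (X ω) - r_o (X ω))))
  have hΔr := (bdd hr hrB).sub (bdd hro hroB)
  have hΔt := (bdd ht htB).sub (bdd hto htoB)
  have hΔ𝔯 := (bdd h𝔯 h𝔯B).sub (bdd hro hroB)
  have hg₁ : MemLp g₁ ∞ μ := (hΔr.mul' hΔt).const_mul _
  have hg₂ : MemLp g₂ ∞ μ :=
    ((((hΔt.mul' (bdd hro hroB)).add (hΔ𝔯.mul' (bdd hto htoB))) : MemLp _ ∞ μ).mul'
      hΔr).const_mul _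
  have hY₁ : Integrable (fun ω => g₁ ω * (Y ω - r_o (X ω) * t_o (X ω))) μ :=
    (hYint.sub hφY).mul_of_top_right hg₁
  have hT₂ : Integrable (fun ω => g₂ ω * (T ω - t_o (X ω))) μ :=
    (hTint.sub hφT).mul_of_top_right hg₂
  calc _ = ∫ ω, g₁ ω * (Y ω - r_o (X ω) * t_o (X ω)) +
        g₂ ω * (T ω - t_o (X ω)) ∂μ :=
        congr_arg _ (funext fun ω => by simp only [g₁, g₂]; ring)
    _ = 0 := by
      rw [integral_add hY₁ hT₂,
        integral_mul_sub_eq_zero_of_condExp_ae_eq hm (by fun_prop) hg₁ hYint (by fun_prop) hφY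
          hYcond,
        integral_mul_sub_eq_zero_of_condExp_ae_eq hm (by fun_prop) hg₂ hTint (by fun_prop) hφT
          hTcond,
        add_zero]

/-- **Neyman orthogonality of the orthogonal loss (Lemma 3.1).**
If `E[Y | X] = r_o(X) * t_o(X)` a.s. and `E[T | X] = t_o(X)` a.s., with `r_o, t_o` bounded
measurable, then for all bounded measurable `r, 𝔯, t` the mixed directional derivative of the
orthogonal population loss vanishes:
`E[2(-Y + T r_o(X))(t(X) - t_o(X))(r(X) - r_o(X))
   + 2(T t_o(X) - t_o(X)^2)(𝔯(X) - r_o(X))(r(X) - r_o(X))] = 0`. -/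
theorem neyman_orthogonality_ortho_loss
    {Ω : Type*} [MeasurableSpace Ω] {μ : Measure Ω} [IsProbabilityMeasure μ]
    {E : Type*} [mE : MeasurableSpace E] (X : Ω → E) (hX : Measurable X)
    (Y T : Ω → ℝ) (hY : Measurable Y) (hT : Measurable T)
    (hYint : Integrable Y μ) (hTint : Integrable T μ)
    (r_o t_o : E → ℝ) (hro : Measurable r_o) (hto : Measurable t_o)
    (hroB : ∃ C, ∀ x, |r_o x| ≤ C) (htoB : ∃ C, ∀ x, |t_o x| ≤ C)
    (hYcond : μ[Y | MeasurableSpace.comap X mE] =ᵐ[μ]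
      fun ω => r_o (X ω) * t_o (X ω))
    (hTcond : μ[T | MeasurableSpace.comap X mE] =ᵐ[μ]
      fun ω => t_o (X ω))
    (r 𝔯 t : E → ℝ) (hr : Measurable r) (h𝔯 : Measurable 𝔯) (ht : Measurable t)
    (hrB : ∃ C, ∀ x, |r x| ≤ C) (h𝔯B : ∃ C, ∀ x, |𝔯 x| ≤ C) (htB : ∃ C, ∀ x, |t x| ≤ C)
    (hint : Integrable (fun ω =>
      2 * (-Y ω + T ω * r_o (X ω)) * (t (X ω) - t_o (X ω)) * (r (X ω) - r_o (X ω)) +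
      2 * (T ω * t_o (X ω) - t_o (X ω) ^ 2) * (𝔯 (X ω) - r_o (X ω)) * (r (X ω) - r_o (X ω))) μ) :
    ∫ ω, (2 * (-Y ω + T ω * r_o (X ω)) * (t (X ω) - t_o (X ω)) * (r (X ω) - r_o (X ω)) +
      2 * (T ω * t_o (X ω) - t_o (X ω) ^ 2) * (𝔯 (X ω) - r_o (X ω)) * (r (X ω) - r_o (X ω)))
      ∂μ = 0 :=
  neyman_orthogonality_ortho_loss_general (mE := mE) X hX Y T hYint hTint r_o t_o hro hto hroB htoB
    hYcond hTcond r 𝔯 t hr h𝔯 ht hrB h𝔯B htB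
end

section
/- (Neyman orthogonality of the loss L^ortho-2 for unknown barrier a.) Let a > 0. Suppose Y, T : Ω → ℝ are random variables, y_o, t_o, r_o : E → ℝ are bounded measurable functions such that E[Y | X] = y_o(X) almost surely, E[T | X] = t_o(X) almost surely, and a·y_o(x) = r_o(x)·t_o(x) for all x ∈ E, and all expectations below are finite. Then for all bounded measurable functions r, y, t : E → ℝ, E[ (−2/a)·(Y + y_o(X) − 2·(r_o(X)/a)·t_o(X))·(t(X) − t_o(X))·(r(X) − r_o(X)) + (2/a)·(T − t_o(X))·(y(X) − y_o(X))·(r(X) − r_o(X)) ] = 0. Equivalently, the mixed directional derivative D_g D_r L^ortho-2(r_o, g_o)[r − r_o, g − g_o] of the population loss L^ortho-2(r; y, t) = E[(Y − (T − t(X))·y(X)/t(X) − r(X)·t(X)/a)²] vanishes at the true nuisance pair g_o = (y_o, t_o) in all directions. -/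
/-!
The EZ relation `a · y_o = r_o · t_o` turns `2 (r_o/a) t_o` into `2 y_o`, so the integrand becomes
`(-2/a) (Y - y_o(X)) A(X) + (2/a) (T - t_o(X)) B(X)` with `A = (t - t_o)(r - r_o)` and
`B = (y - y_o)(r - r_o)` bounded. Each residual is orthogonal to bounded `σ(X)`-measurable
functions: pulling `A(X)` out of `E[A(X) Y | X]` gives `E[A(X) Y] = E[A(X) y_o(X)]`.
-/

open MeasureTheory

lemma exists_abs_le_sub {α : Type*} {f g : α → ℝ} (hf : ∃ C, ∀ x, |f x| ≤ C)
    (hg : ∃ C, ∀ x, |g x| ≤ C) : ∃ C, ∀ x, |f x - g x| ≤ C := by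
  obtain ⟨C, hC⟩ := hf
  obtain ⟨D, hD⟩ := hg
  exact ⟨C + D, fun x => (abs_sub _ _).trans (add_le_add (hC x) (hD x))⟩

lemma exists_abs_le_mul {α : Type*} {f g : α → ℝ} (hf : ∃ C, ∀ x, |f x| ≤ C)
    (hg : ∃ C, ∀ x, |g x| ≤ C) : ∃ C, ∀ x, |f x * g x| ≤ C := by
  obtain ⟨C, hC⟩ := hf
  obtain ⟨D, hD⟩ := hg
  refine ⟨C * D, fun x => ?_⟩
  rw [abs_mul]
  exact mul_le_mul (hC x) (hD x) (abs_nonneg _) ((abs_nonneg _).trans (hC x))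

section Residual

variable {Ω : Type*} {m m₀ : MeasurableSpace Ω} {μ : Measure Ω} {Z g f : Ω → ℝ} {c : ℝ}

lemma integrable_sub_mul_of_condExp_ae_eq (hZ : Integrable Z μ) (hg : μ[Z | m] =ᵐ[μ] g)
    (hf : AEStronglyMeasurable f μ) (hfc : ∀ᵐ ω ∂μ, ‖f ω‖ ≤ c) :
    Integrable (fun ω => (Z ω - g ω) * f ω) μ :=
  (hZ.sub (integrable_condExp.congr hg)).mul_bdd hf hfc

lemma integral_mul_eq_integral_mul_condExp [IsFiniteMeasure μ] (hm : m ≤ m₀) (hZ : Integrable Z μ)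
    (hf : StronglyMeasurable[m] f) (hfc : ∀ᵐ ω ∂μ, ‖f ω‖ ≤ c) :
    ∫ ω, f ω * Z ω ∂μ = ∫ ω, f ω * μ[Z | m] ω ∂μ :=
  (integral_condExp hm).symm.trans
    (integral_congr_ae (condExp_stronglyMeasurable_mul_of_bound hm hf hZ c hfc))

lemma integral_sub_mul_eq_zero_of_condExp_ae_eq [IsFiniteMeasure μ] (hm : m ≤ m₀) (hZ : Integrable Z μ)
    (hg : μ[Z | m] =ᵐ[μ] g) (hf : StronglyMeasurable[m] f) (hfc : ∀ᵐ ω ∂μ, ‖f ω‖ ≤ c) :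
    ∫ ω, (Z ω - g ω) * f ω ∂μ = 0 := by
  have hfZ : Integrable (fun ω => f ω * Z ω) μ :=
    hZ.bdd_mul (hf.mono hm).aestronglyMeasurable hfc
  have hfg : Integrable (fun ω => f ω * g ω) μ :=
    (integrable_condExp.congr hg).bdd_mul (hf.mono hm).aestronglyMeasurable hfc
  calc ∫ ω, (Z ω - g ω) * f ω ∂μ = ∫ ω, f ω * Z ω - f ω * g ω ∂μ := by
        congr 1; ext ω; ring
    _ = 0 := by
        rw [integral_sub hfZ hfg, integral_mul_eq_integral_mul_condExp hm hZ hf hfc, sub_eq_zero]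
        exact integral_congr_ae (hg.mono fun ω hω => congrArg (f ω * ·) hω)

end Residual

section ConditionOnX

variable {Ω E : Type*} {m₀ : MeasurableSpace Ω} {mE : MeasurableSpace E} {μ : Measure Ω}
  {X : Ω → E} {Z : Ω → ℝ} {z f : E → ℝ}

lemma integrable_sub_mul_comp (hX : Measurable X) (hZ : Integrable Z μ)
    (hz : μ[Z | mE.comap X] =ᵐ[μ] fun ω => z (X ω)) (hf : Measurable f)
    (hfB : ∃ C, ∀ x, |f x| ≤ C) : Integrable (fun ω => (Z ω - z (X ω)) * f (X ω)) μ := by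
  obtain ⟨C, hC⟩ := hfB
  exact integrable_sub_mul_of_condExp_ae_eq hZ hz (hf.comp hX).aestronglyMeasurable
    (c := C) (ae_of_all _ fun ω => hC (X ω))

lemma integral_sub_mul_comp_eq_zero [IsFiniteMeasure μ] (hX : Measurable X) (hZ : Integrable Z μ)
    (hz : μ[Z | mE.comap X] =ᵐ[μ] fun ω => z (X ω)) (hf : Measurable f)
    (hfB : ∃ C, ∀ x, |f x| ≤ C) : ∫ ω, (Z ω - z (X ω)) * f (X ω) ∂μ = 0 := by
  obtain ⟨C, hC⟩ := hfB
  exact integral_sub_mul_eq_zero_of_condExp_ae_eq hX.comap_le hZ hz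
    (hf.comp (comap_measurable X)).stronglyMeasurable (c := C) (ae_of_all _ fun ω => hC (X ω))

end ConditionOnX

theorem neyman_orthogonality_ortho2_loss_general
    {Ω : Type*} [MeasurableSpace Ω] {μ : Measure Ω} [IsProbabilityMeasure μ]
    {E : Type*} [mE : MeasurableSpace E] (X : Ω → E) (hX : Measurable X)
    (a : ℝ) (ha : 0 < a)
    (Y T : Ω → ℝ)
    (hYint : Integrable Y μ) (hTint : Integrable T μ)
    (y_o t_o r_o : E → ℝ) (hyo : Measurable y_o) (hto : Measurable t_o) (hro : Measurable r_o)
    (hyoB : ∃ C, ∀ x, |y_o x| ≤ C) (htoB : ∃ C, ∀ x, |t_o x| ≤ C) (hroB : ∃ C, ∀ x, |r_o x| ≤ C)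
    (hYcond : μ[Y | MeasurableSpace.comap X mE] =ᵐ[μ] fun ω => y_o (X ω))
    (hTcond : μ[T | MeasurableSpace.comap X mE] =ᵐ[μ] fun ω => t_o (X ω))
    (hEZ : ∀ x, a * y_o x = r_o x * t_o x)
    (r y t : E → ℝ) (hr : Measurable r) (hy : Measurable y) (ht : Measurable t)
    (hrB : ∃ C, ∀ x, |r x| ≤ C) (hyB : ∃ C, ∀ x, |y x| ≤ C) (htB : ∃ C, ∀ x, |t x| ≤ C) :
    ∫ ω, ((-2 / a) * (Y ω + y_o (X ω) - 2 * (r_o (X ω) / a) * t_o (X ω)) *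
        (t (X ω) - t_o (X ω)) * (r (X ω) - r_o (X ω)) +
      (2 / a) * (T ω - t_o (X ω)) * (y (X ω) - y_o (X ω)) * (r (X ω) - r_o (X ω))) ∂μ = 0 := by
  have hyo' : ∀ x, 2 * (r_o x / a) * t_o x = 2 * y_o x := fun x => by
    field_simp
    linarith [hEZ x]
  set A : E → ℝ := fun x => (t x - t_o x) * (r x - r_o x)
  set B : E → ℝ := fun x => (y x - y_o x) * (r x - r_o x)
  have hAm : Measurable A := by fun_prop
  have hBm : Measurable B := by fun_prop
  have hAB : ∃ C, ∀ x, |A x| ≤ C :=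
    exists_abs_le_mul (exists_abs_le_sub htB htoB) (exists_abs_le_sub hrB hroB)
  have hBB : ∃ C, ∀ x, |B x| ≤ C :=
    exists_abs_le_mul (exists_abs_le_sub hyB hyoB) (exists_abs_le_sub hrB hroB)
  calc _ = ∫ ω, (-2 / a) * ((Y ω - y_o (X ω)) * A (X ω)) +
          (2 / a) * ((T ω - t_o (X ω)) * B (X ω)) ∂μ :=
        integral_congr_ae (ae_of_all _ fun ω => by rw [hyo']; ring)
    _ = (-2 / a) * ∫ ω, (Y ω - y_o (X ω)) * A (X ω) ∂μ +
          (2 / a) * ∫ ω, (T ω - t_o (X ω)) * B (X ω) ∂μ := by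
        rw [integral_add ((integrable_sub_mul_comp hX hYint hYcond hAm hAB).const_mul _)
          ((integrable_sub_mul_comp hX hTint hTcond hBm hBB).const_mul _),
          integral_const_mul, integral_const_mul]
    _ = 0 := by
        rw [integral_sub_mul_comp_eq_zero hX hYint hYcond hAm hAB,
          integral_sub_mul_comp_eq_zero hX hTint hTcond hBm hBB]
        ring

/-- **Neyman orthogonality of the loss `L^ortho-2` for unknown barrier `a`.**
If `E[Y | X] = y_o(X)` a.s., `E[T | X] = t_o(X)` a.s., and `a * y_o = r_o * t_o` pointwise,
with `y_o, t_o, r_o` bounded measurable, then for all bounded measurable `r, y, t` the mixed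
directional derivative of `L^ortho-2` vanishes:
`E[(-2/a)(Y + y_o(X) - 2 (r_o(X)/a) t_o(X))(t(X) - t_o(X))(r(X) - r_o(X))
   + (2/a)(T - t_o(X))(y(X) - y_o(X))(r(X) - r_o(X))] = 0`. -/
theorem neyman_orthogonality_ortho2_loss
    {Ω : Type*} [MeasurableSpace Ω] {μ : Measure Ω} [IsProbabilityMeasure μ]
    {E : Type*} [mE : MeasurableSpace E] (X : Ω → E) (hX : Measurable X)
    (a : ℝ) (ha : 0 < a)
    (Y T : Ω → ℝ) (hY : Measurable Y) (hT : Measurable T)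
    (hYint : Integrable Y μ) (hTint : Integrable T μ)
    (y_o t_o r_o : E → ℝ) (hyo : Measurable y_o) (hto : Measurable t_o) (hro : Measurable r_o)
    (hyoB : ∃ C, ∀ x, |y_o x| ≤ C) (htoB : ∃ C, ∀ x, |t_o x| ≤ C) (hroB : ∃ C, ∀ x, |r_o x| ≤ C)
    (hYcond : μ[Y | MeasurableSpace.comap X mE] =ᵐ[μ] fun ω => y_o (X ω))
    (hTcond : μ[T | MeasurableSpace.comap X mE] =ᵐ[μ] fun ω => t_o (X ω))
    (hEZ : ∀ x, a * y_o x = r_o x * t_o x)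
    (r y t : E → ℝ) (hr : Measurable r) (hy : Measurable y) (ht : Measurable t)
    (hrB : ∃ C, ∀ x, |r x| ≤ C) (hyB : ∃ C, ∀ x, |y x| ≤ C) (htB : ∃ C, ∀ x, |t x| ≤ C)
    (hint : Integrable (fun ω =>
      (-2 / a) * (Y ω + y_o (X ω) - 2 * (r_o (X ω) / a) * t_o (X ω)) *
        (t (X ω) - t_o (X ω)) * (r (X ω) - r_o (X ω)) +
      (2 / a) * (T ω - t_o (X ω)) * (y (X ω) - y_o (X ω)) * (r (X ω) - r_o (X ω))) μ) :
    ∫ ω, ((-2 / a) * (Y ω + y_o (X ω) - 2 * (r_o (X ω) / a) * t_o (X ω)) *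
        (t (X ω) - t_o (X ω)) * (r (X ω) - r_o (X ω)) +
      (2 / a) * (T ω - t_o (X ω)) * (y (X ω) - y_o (X ω)) * (r (X ω) - r_o (X ω))) ∂μ = 0 :=
  neyman_orthogonality_ortho2_loss_general (mE := mE) X hX a ha Y T hYint hTint y_o t_o r_o hyo hto
    hro hyoB htoB hroB hYcond hTcond hEZ r y t hr hy ht hrB hyB htB
end

section
/- (Variance of the response time is at most the squared mean under the EZ diffusion model.) For every a > 0 and every real r ≠ 0, a·(e^{4ar} − 1 − 4ar·e^{2ar}) / (r³·(e^{2ar}+1)²) ≤ a²·(e^{2ar}−1)² / (r²·(e^{2ar}+1)²). -/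
/-!
With `y = a r` and `E = e^{2y}`, the mean is `a tanh y / r` and
`tanh y = (E - 1) / (E + 1)`, and the gap between the squared mean and the variance
simplifies to `(y² - y tanh y) / r⁴`. So the claim is the elementary `y tanh y ≤ y²`,
which holds because `y cosh y - sinh y` is monotone (its derivative is `y sinh y ≥ 0`)
and vanishes at `0`.
-/

namespace Real

theorem mul_sinh_nonneg (x : ℝ) : 0 ≤ x * sinh x := by
  rcases le_total 0 x with hx | hx
  · exact mul_nonneg hx (sinh_nonneg_iff.2 hx)
  · exact mul_nonneg_of_nonpos_of_nonpos hx (sinh_nonpos_iff.2 hx)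

theorem monotone_mul_cosh_sub_sinh : Monotone fun x : ℝ => x * cosh x - sinh x := by
  have hderiv (x : ℝ) : HasDerivAt (fun x : ℝ => x * cosh x - sinh x) (x * sinh x) x :=
    (((hasDerivAt_id' x).mul (hasDerivAt_cosh x)).sub (hasDerivAt_sinh x)).congr_deriv
      (by ring)
  refine monotone_of_deriv_nonneg (fun x => (hderiv x).differentiableAt) fun x => ?_
  rw [(hderiv x).deriv]
  exact mul_sinh_nonneg x

theorem mul_tanh_le_sq (x : ℝ) : x * tanh x ≤ x ^ 2 := by
  have hsign : 0 ≤ x * (x * cosh x - sinh x) := by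
    rcases le_total 0 x with hx | hx
    · exact mul_nonneg hx (by simpa using monotone_mul_cosh_sub_sinh hx)
    · exact mul_nonneg_of_nonpos_of_nonpos hx (by simpa using monotone_mul_cosh_sub_sinh hx)
  rw [tanh_eq_sinh_div_cosh, mul_div_assoc', div_le_iff₀ (cosh_pos x)]
  nlinarith

theorem tanh_eq_exp_two_mul (x : ℝ) : tanh x = (exp (2 * x) - 1) / (exp (2 * x) + 1) := by
  have hx : exp (2 * x) = exp x * exp x := by rw [two_mul, exp_add]
  rw [tanh_eq, hx, exp_neg]
  field_simp

end Real

theorem ez_var_le_sq_mean_general (a r : ℝ) (hr : r ≠ 0) :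
    a * (Real.exp (4 * a * r) - 1 - 4 * a * r * Real.exp (2 * a * r)) /
        (r ^ 3 * (Real.exp (2 * a * r) + 1) ^ 2)
      ≤ a ^ 2 * (Real.exp (2 * a * r) - 1) ^ 2 /
        (r ^ 2 * (Real.exp (2 * a * r) + 1) ^ 2) := by
  have hexp : Real.exp (4 * a * r) = Real.exp (2 * (a * r)) ^ 2 := by
    rw [← Real.exp_nat_mul]; ring_nf
  have hgap : a ^ 2 * (Real.exp (2 * a * r) - 1) ^ 2 / (r ^ 2 * (Real.exp (2 * a * r) + 1) ^ 2)
      - a * (Real.exp (4 * a * r) - 1 - 4 * a * r * Real.exp (2 * a * r)) /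
        (r ^ 3 * (Real.exp (2 * a * r) + 1) ^ 2)
      = ((a * r) ^ 2 - a * r * Real.tanh (a * r)) / r ^ 4 := by
    rw [Real.tanh_eq_exp_two_mul, hexp, ← mul_assoc]
    field_simp
    ring
  rw [← sub_nonneg, hgap]
  exact div_nonneg (sub_nonneg.2 (Real.mul_tanh_le_sq _)) (by positivity)

/-- **Variance of the response time is at most the squared mean under the EZ diffusion model.**
For every `a > 0` and every real `r ≠ 0`,
`a (e^{4ar} - 1 - 4ar e^{2ar}) / (r³ (e^{2ar}+1)²) ≤ a² (e^{2ar}-1)² / (r² (e^{2ar}+1)²)`. -/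
theorem ez_var_le_sq_mean (a r : ℝ) (ha : 0 < a) (hr : r ≠ 0) :
    a * (Real.exp (4 * a * r) - 1 - 4 * a * r * Real.exp (2 * a * r)) /
        (r ^ 3 * (Real.exp (2 * a * r) + 1) ^ 2)
      ≤ a ^ 2 * (Real.exp (2 * a * r) - 1) ^ 2 /
        (r ^ 2 * (Real.exp (2 * a * r) + 1) ^ 2) :=
  ez_var_le_sq_mean_general a r hr
end

section
/- (Exact conditional variance identity for the EZ diffusion moments.) For every a > 0 and every real r ≠ 0, setting y = tanh(ar), t = a·tanh(ar)/r, and V = a·(e^{4ar} − 1 − 4ar·e^{2ar})/(r³·(e^{2ar}+1)²), one has t²·(1 − y²) + V·y² = t³/a². -/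
lemma tanh_eq_exp (x : ℝ) :
    Real.tanh x = (Real.exp (2 * x) - 1) / (Real.exp (2 * x) + 1) := by
  have hx : Real.exp x ≠ 0 := Real.exp_ne_zero x
  have h2 : Real.exp (2 * x) = Real.exp x * Real.exp x := by
    rw [two_mul, Real.exp_add]
  have hc : Real.exp x + Real.exp (-x) ≠ 0 := by positivity
  have hd : Real.exp (2 * x) + 1 ≠ 0 := by positivity
  rw [Real.tanh_eq_sinh_div_cosh, Real.sinh_eq, Real.cosh_eq, h2, Real.exp_neg]
  field_simp

/-- **Exact conditional variance identity for the EZ diffusion moments.** For every `a > 0`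
and real `r ≠ 0`, with `y = tanh(ar)`, `t = a tanh(ar)/r`, and
`V = a (e^{4ar} - 1 - 4ar e^{2ar}) / (r³ (e^{2ar}+1)²)`, one has
`t² (1 - y²) + V y² = t³ / a²`. -/
theorem ez_exact_variance_identity (a r : ℝ) (ha : 0 < a) (hr : r ≠ 0)
    (y t V : ℝ)
    (hy : y = Real.tanh (a * r))
    (ht : t = a * Real.tanh (a * r) / r)
    (hV : V = a * (Real.exp (4 * a * r) - 1 - 4 * a * r * Real.exp (2 * a * r)) /
      (r ^ 3 * (Real.exp (2 * a * r) + 1) ^ 2)) :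
    t ^ 2 * (1 - y ^ 2) + V * y ^ 2 = t ^ 3 / a ^ 2 := by
  have h4 : Real.exp (4 * a * r) = Real.exp (2 * (a * r)) * Real.exp (2 * (a * r)) := by
    rw [← Real.exp_add]; ring_nf
  have hd : Real.exp (2 * (a * r)) + 1 ≠ 0 := by positivity
  have ha' : a ≠ 0 := ha.ne'
  subst hy ht hV
  rw [tanh_eq_exp, show (2 : ℝ) * a * r = 2 * (a * r) by ring, h4]
  field_simp
  ring
end

section
/- (Pointwise comparison of the log-loss and orthogonal-loss information terms.) Let σ(v) = 1/(1+e^{−v}) denote the logistic sigmoid. For every a > 0 and every real x ≠ 0, 4a²·σ(2ax)·σ(−2ax) ≤ (tanh(ax)/x)². -/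
/-- The logistic sigmoid `σ(v) = 1 / (1 + e^{-v})`. -/
noncomputable def sigmoid (v : ℝ) : ℝ := 1 / (1 + Real.exp (-v))

lemma sigmoid_prod (u : ℝ) :
    sigmoid (2 * u) * sigmoid (-(2 * u)) = 1 / (4 * Real.cosh u ^ 2) := by
  unfold sigmoid
  rw [div_mul_div_comm, one_mul]
  congr 1
  have h : Real.cosh u = (Real.exp u + Real.exp (-u)) / 2 := Real.cosh_eq u
  rw [h]
  have e1 : Real.exp (2 * u) = Real.exp u * Real.exp u := by
    rw [← Real.exp_add]; ring_nf
  have e2 : Real.exp (-(2 * u)) = Real.exp (-u) * Real.exp (-u) := by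
    rw [← Real.exp_add]; ring_nf
  have e3 : Real.exp u * Real.exp (-u) = 1 := by rw [← Real.exp_add]; simp
  rw [neg_neg, e1, e2]
  linear_combination (Real.exp u * Real.exp (-u) - 1) * e3

/-- **Pointwise comparison of the log-loss and orthogonal-loss information terms.** For every
`a > 0` and real `x ≠ 0`, `4a² σ(2ax) σ(-2ax) ≤ (tanh(ax)/x)²`. -/
theorem logistic_info_le_ortho_info (a x : ℝ) (ha : 0 < a) (hx : x ≠ 0) :
    4 * a ^ 2 * sigmoid (2 * a * x) * sigmoid (-(2 * a * x))
      ≤ (Real.tanh (a * x) / x) ^ 2 := by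
  set u := a * x with hu
  have hL : 4 * a ^ 2 * sigmoid (2 * a * x) * sigmoid (-(2 * a * x))
      = a ^ 2 / Real.cosh u ^ 2 := by
    have := sigmoid_prod u
    have h2 : 2 * a * x = 2 * u := by ring
    rw [h2, mul_assoc, this]
    have hc := Real.cosh_pos u
    field_simp
  rw [hL, Real.tanh_eq_sinh_div_cosh, div_div, div_pow]
  have hc := Real.cosh_pos u
  have hden : (0:ℝ) < (Real.cosh u * x) ^ 2 := by positivity
  rw [div_le_div_iff₀ (by positivity) hden]
  have key : u ^ 2 ≤ Real.sinh u ^ 2 := by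
    have h1 : |u| ≤ |Real.sinh u| := by
      rw [Real.abs_sinh]
      have hu0 : 0 < |u| := abs_pos.mpr (by simp [hu, ha.ne', hx])
      exact (Real.self_lt_sinh_iff.mpr hu0).le
    calc u ^ 2 = |u| ^ 2 := (sq_abs u).symm
      _ ≤ |Real.sinh u| ^ 2 := pow_le_pow_left₀ (abs_nonneg u) h1 2
      _ = Real.sinh u ^ 2 := sq_abs _
  calc a ^ 2 * (Real.cosh u * x) ^ 2 = u ^ 2 * Real.cosh u ^ 2 := by rw [hu]; ring
    _ ≤ Real.sinh u ^ 2 * Real.cosh u ^ 2 :=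
        mul_le_mul_of_nonneg_right key (sq_nonneg _)
end

section
/- (Approximate Neyman orthogonality of the capped orthogonal loss.) Let S > 0. Suppose Y, T̆ : Ω → ℝ are random variables and r_o, t_o, t̆_o : E → ℝ are bounded measurable functions with E[Y | X] = r_o(X)·t_o(X) almost surely, E[T̆ | X] = t̆_o(X) almost surely, and |r_o(x)| ≤ S for all x ∈ E. Then for all square-integrable measurable functions r, 𝔯, t̆ : E → ℝ (with all expectations below finite), | E[ 2·(T̆ − t̆_o(X))·t̆_o(X)·(r(X) − r_o(X))·(𝔯(X) − r_o(X)) ] − E[ 2·(Y − t̆_o(X)·r_o(X))·(t̆(X) − t̆_o(X))·(r(X) − r_o(X)) ] | ≤ 2S·‖t_o − t̆_o‖_{L∞}·‖t̆ − t̆_o‖_{L²}·‖r − r_o‖_{L²}. -/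
/-!
Both integrals are computed by conditioning on `X`. The weights multiplying the residuals
`T̆ - t̆_o(X)` and `Y - t̆_o(X) r_o(X)` are `σ(X)`-measurable, so they pull out of the conditional
expectation, leaving the conditional means of the residuals: `0` for the first and
`r_o(X) (t_o(X) - t̆_o(X))` for the second, where the cap makes `t̆_o ≠ t_o`. The difference is thus
`-E[2 (t̆ - t̆_o)(X) (r - r_o)(X) r_o(X) (t_o - t̆_o)(X)]`, bounded by `2 S ‖t_o - t̆_o‖_{L∞}` times
the Cauchy–Schwarz bound `‖t̆ - t̆_o‖_{L²} ‖r - r_o‖_{L²}`.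
-/

open MeasureTheory Filter

namespace MeasureTheory

variable {Ω : Type*} {m m₀ : MeasurableSpace Ω} {μ : Measure Ω}

theorem integral_mul_eq_integral_mul_condExp (hm : m ≤ m₀) [SigmaFinite (μ.trim hm)]
    {G Z : Ω → ℝ} (hG : StronglyMeasurable[m] G) (hGZ : Integrable (G * Z) μ)
    (hZ : Integrable Z μ) :
    ∫ ω, G ω * Z ω ∂μ = ∫ ω, G ω * μ[Z | m] ω ∂μ :=
  calc ∫ ω, G ω * Z ω ∂μ = ∫ ω, μ[G * Z | m] ω ∂μ := (integral_condExp hm).symm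
    _ = ∫ ω, G ω * μ[Z | m] ω ∂μ :=
      integral_congr_ae (condExp_mul_of_stronglyMeasurable_left hG hGZ hZ)

theorem integral_mul_sub_eq_of_condExp_ae_eq (hm : m ≤ m₀) [SigmaFinite (μ.trim hm)]
    {G Z W c : Ω → ℝ} (hG : StronglyMeasurable[m] G) (hW : StronglyMeasurable[m] W)
    (hZ : Integrable Z μ) (hWi : Integrable W μ)
    (hGZW : Integrable (fun ω => G ω * (Z ω - W ω)) μ) (hc : μ[Z | m] =ᵐ[μ] c) :
    ∫ ω, G ω * (Z ω - W ω) ∂μ = ∫ ω, G ω * (c ω - W ω) ∂μ := by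
  have hcond : μ[Z - W | m] =ᵐ[μ] c - W := by
    filter_upwards [condExp_sub hZ hWi m, hc] with ω hsub hcω
    rw [hsub, Pi.sub_apply, condExp_of_stronglyMeasurable hm hW hWi, hcω, Pi.sub_apply]
  calc ∫ ω, G ω * (Z ω - W ω) ∂μ = ∫ ω, G ω * μ[Z - W | m] ω ∂μ :=
        integral_mul_eq_integral_mul_condExp hm hG hGZW (hZ.sub hWi)
    _ = ∫ ω, G ω * (c ω - W ω) ∂μ := by
      refine integral_congr_ae ?_
      filter_upwards [hcond] with ω hω
      rw [hω, Pi.sub_apply]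

theorem integral_comp_mul_sub_eq_of_condExp_comap_ae_eq [IsFiniteMeasure μ] {E : Type*}
    [mE : MeasurableSpace E] {X : Ω → E} (hX : Measurable[m₀] X) {Z : Ω → ℝ} {g w c : E → ℝ}
    {C : ℝ} (hg : Measurable g) (hw : Measurable w) (hwC : ∀ x, |w x| ≤ C) (hZ : Integrable Z μ)
    (hgZw : Integrable (fun ω => g (X ω) * (Z ω - w (X ω))) μ)
    (hc : μ[Z | mE.comap X] =ᵐ[μ] fun ω => c (X ω)) :
    ∫ ω, g (X ω) * (Z ω - w (X ω)) ∂μ = ∫ ω, g (X ω) * (c (X ω) - w (X ω)) ∂μ :=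
  integral_mul_sub_eq_of_condExp_ae_eq hX.comap_le
    (hg.comp (comap_measurable X)).stronglyMeasurable
    (hw.comp (comap_measurable X)).stronglyMeasurable hZ
    (.of_bound (hw.comp hX).aestronglyMeasurable C (.of_forall fun ω => hwC (X ω))) hgZw hc

theorem integral_abs_mul_abs_le_sqrt_mul_sqrt {a b : Ω → ℝ} (ha : MemLp a 2 μ)
    (hb : MemLp b 2 μ) :
    ∫ ω, |a ω| * |b ω| ∂μ ≤ √(∫ ω, a ω ^ 2 ∂μ) * √(∫ ω, b ω ^ 2 ∂μ) := by
  have hofReal : ENNReal.ofReal 2 = 2 := ENNReal.ofReal_ofNat 2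
  have := integral_mul_norm_le_Lp_mul_Lq Real.HolderConjugate.two_two (hofReal ▸ ha) (hofReal ▸ hb)
  simpa only [Real.norm_eq_abs, Real.rpow_two, sq_abs, Real.sqrt_eq_rpow, one_div] using this

theorem abs_integral_le_mul_sqrt_mul_sqrt {a b f : Ω → ℝ} {K : ℝ} (ha : MemLp a 2 μ)
    (hb : MemLp b 2 μ) (hK : 0 ≤ K) (hf : ∀ᵐ ω ∂μ, |f ω| ≤ K * (|a ω| * |b ω|)) :
    |∫ ω, f ω ∂μ| ≤ K * √(∫ ω, a ω ^ 2 ∂μ) * √(∫ ω, b ω ^ 2 ∂μ) := by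
  have hab : Integrable (fun ω => |a ω| * |b ω|) μ := ha.abs.integrable_mul hb.abs
  calc |∫ ω, f ω ∂μ| ≤ ∫ ω, K * (|a ω| * |b ω|) ∂μ :=
        norm_integral_le_of_norm_le (f := f) (hab.const_mul K) hf
    _ = K * ∫ ω, |a ω| * |b ω| ∂μ := integral_const_mul K _
    _ ≤ K * √(∫ ω, a ω ^ 2 ∂μ) * √(∫ ω, b ω ^ 2 ∂μ) := by
      rw [mul_assoc]
      exact mul_le_mul_of_nonneg_left (integral_abs_mul_abs_le_sqrt_mul_sqrt ha hb) hK

theorem abs_integral_two_mul_mul_mul_le {a b u v : Ω → ℝ} {S M : ℝ} (ha : MemLp a 2 μ)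
    (hb : MemLp b 2 μ) (hS : 0 ≤ S) (hM : 0 ≤ M) (hu : ∀ᵐ ω ∂μ, |u ω| ≤ S)
    (hv : ∀ᵐ ω ∂μ, |v ω| ≤ M) :
    |∫ ω, 2 * a ω * b ω * (u ω * v ω) ∂μ| ≤
      2 * S * M * √(∫ ω, a ω ^ 2 ∂μ) * √(∫ ω, b ω ^ 2 ∂μ) := by
  refine abs_integral_le_mul_sqrt_mul_sqrt ha hb (by positivity) ?_
  filter_upwards [hu, hv] with ω huω hvω
  have huv := mul_le_mul huω hvω (abs_nonneg _) hS
  calc _ = 2 * (|u ω| * |v ω|) * (|a ω| * |b ω|) := by simp only [abs_mul, abs_two]; ring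
    _ ≤ _ := by rw [mul_assoc 2 S]; gcongr

theorem ae_abs_le_essSup_abs {f : Ω → ℝ} {C : ℝ} (hf : ∀ ω, |f ω| ≤ C) :
    ∀ᵐ ω ∂μ, |f ω| ≤ essSup (fun ω => |f ω|) μ :=
  ae_le_essSup (isBoundedUnder_of ⟨C, hf⟩)

theorem essSup_abs_nonneg [NeZero μ] {f : Ω → ℝ} {C : ℝ} (hf : ∀ ω, |f ω| ≤ C) :
    0 ≤ essSup (fun ω => |f ω|) μ :=
  (ae_abs_le_essSup_abs hf).exists.elim fun _ hω => (abs_nonneg _).trans hω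

theorem memLp_two_sub_of_integrable_sq_of_abs_le [IsFiniteMeasure μ] {f g : Ω → ℝ} {C : ℝ}
    (hf : AEStronglyMeasurable f μ) (hf2 : Integrable (fun ω => f ω ^ 2) μ)
    (hg : AEStronglyMeasurable g μ) (hgC : ∀ ω, |g ω| ≤ C) :
    MemLp (fun ω => f ω - g ω) 2 μ :=
  ((memLp_two_iff_integrable_sq hf).2 hf2).sub (.of_bound hg C (.of_forall hgC))

end MeasureTheory

theorem approx_orthogonality_capped_loss_general
    {Ω : Type*} [MeasurableSpace Ω] {μ : Measure Ω} [IsProbabilityMeasure μ]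
    {E : Type*} [mE : MeasurableSpace E] (X : Ω → E) (hX : Measurable X)
    (S : ℝ) (hS : 0 < S)
    (Y T' : Ω → ℝ)
    (hYint : Integrable Y μ) (hT'int : Integrable T' μ)
    (r_o t_o t'_o : E → ℝ)
    (hro : Measurable r_o) (ht'o : Measurable t'_o)
    (hroB : ∀ x, |r_o x| ≤ S)
    (htoB : ∃ C, ∀ x, |t_o x| ≤ C) (ht'oB : ∃ C, ∀ x, |t'_o x| ≤ C)
    (hYcond : μ[Y | MeasurableSpace.comap X mE] =ᵐ[μ] fun ω => r_o (X ω) * t_o (X ω))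
    (hT'cond : μ[T' | MeasurableSpace.comap X mE] =ᵐ[μ] fun ω => t'_o (X ω))
    (r 𝔯 t' : E → ℝ) (hr : Measurable r) (h𝔯 : Measurable 𝔯) (ht' : Measurable t')
    (hr2 : Integrable (fun ω => (r (X ω)) ^ 2) μ)
    (ht'2 : Integrable (fun ω => (t' (X ω)) ^ 2) μ)
    (hint1 : Integrable (fun ω =>
      2 * (T' ω - t'_o (X ω)) * t'_o (X ω) * (r (X ω) - r_o (X ω)) * (𝔯 (X ω) - r_o (X ω))) μ)
    (hint2 : Integrable (fun ω =>
      2 * (Y ω - t'_o (X ω) * r_o (X ω)) * (t' (X ω) - t'_o (X ω)) * (r (X ω) - r_o (X ω))) μ) :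
    |(∫ ω, 2 * (T' ω - t'_o (X ω)) * t'_o (X ω) * (r (X ω) - r_o (X ω)) *
          (𝔯 (X ω) - r_o (X ω)) ∂μ) -
      ∫ ω, 2 * (Y ω - t'_o (X ω) * r_o (X ω)) * (t' (X ω) - t'_o (X ω)) *
          (r (X ω) - r_o (X ω)) ∂μ|
      ≤ 2 * S * (essSup (fun ω => (|t_o (X ω) - t'_o (X ω)| : ℝ)) μ) *
        Real.sqrt (∫ ω, (t' (X ω) - t'_o (X ω)) ^ 2 ∂μ) *
        Real.sqrt (∫ ω, (r (X ω) - r_o (X ω)) ^ 2 ∂μ) := by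
  obtain ⟨Ct, htoB⟩ := htoB
  obtain ⟨Ct', ht'oB⟩ := ht'oB
  have hfirst : ∫ ω, 2 * (T' ω - t'_o (X ω)) * t'_o (X ω) * (r (X ω) - r_o (X ω)) *
      (𝔯 (X ω) - r_o (X ω)) ∂μ = 0 := by
    have h := integral_comp_mul_sub_eq_of_condExp_comap_ae_eq hX
      (g := fun x => 2 * t'_o x * (r x - r_o x) * (𝔯 x - r_o x)) (by fun_prop) ht'o ht'oB
      hT'int (by convert hint1 using 2; ring) hT'cond
    simp only [sub_self, mul_zero, integral_zero] at h
    rw [← h]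
    congr 1; funext ω; ring
  have hsecond : ∫ ω, 2 * (Y ω - t'_o (X ω) * r_o (X ω)) * (t' (X ω) - t'_o (X ω)) *
      (r (X ω) - r_o (X ω)) ∂μ = ∫ ω, 2 * (t' (X ω) - t'_o (X ω)) * (r (X ω) - r_o (X ω)) *
        (r_o (X ω) * (t_o (X ω) - t'_o (X ω))) ∂μ := by
    have h := integral_comp_mul_sub_eq_of_condExp_comap_ae_eq hX
      (g := fun x => 2 * (t' x - t'_o x) * (r x - r_o x)) (w := fun x => t'_o x * r_o x)
      (c := fun x => r_o x * t_o x) (by fun_prop) (by fun_prop) (C := Ct' * S) (fun x => by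
        simpa only [abs_mul] using
          mul_le_mul (ht'oB x) (hroB x) (abs_nonneg _) ((abs_nonneg _).trans (ht'oB x)))
      hYint (by convert hint2 using 2; ring) hYcond
    convert h using 3 <;> ring
  have htt'B : ∀ ω, |t_o (X ω) - t'_o (X ω)| ≤ Ct + Ct' := fun ω =>
    (abs_sub _ _).trans (add_le_add (htoB _) (ht'oB _))
  rw [hfirst, hsecond, zero_sub, abs_neg]
  exact abs_integral_two_mul_mul_mul_le
    (memLp_two_sub_of_integrable_sq_of_abs_le (ht'.comp hX).aestronglyMeasurable ht'2
      (ht'o.comp hX).aestronglyMeasurable (fun ω => ht'oB (X ω)))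
    (memLp_two_sub_of_integrable_sq_of_abs_le (hr.comp hX).aestronglyMeasurable hr2
      (hro.comp hX).aestronglyMeasurable (fun ω => hroB (X ω)))
    hS.le (essSup_abs_nonneg htt'B) (.of_forall fun ω => hroB (X ω)) (ae_abs_le_essSup_abs htt'B)

/-- **Approximate Neyman orthogonality of the capped orthogonal loss.**
With `E[Y | X] = r_o(X) t_o(X)` a.s., `E[T̆ | X] = t̆_o(X)` a.s., and `|r_o| ≤ S`, the mixed
directional derivative of the capped orthogonal loss at the truth is bounded by
`2 S ‖t_o - t̆_o‖_{L∞} ‖t̆ - t̆_o‖_{L²} ‖r - r_o‖_{L²}`, where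
`‖f‖_{L²} = (E[f(X)²])^{1/2}` and `‖f‖_{L∞} = ess sup |f(X)|`. -/
theorem approx_orthogonality_capped_loss
    {Ω : Type*} [MeasurableSpace Ω] {μ : Measure Ω} [IsProbabilityMeasure μ]
    {E : Type*} [mE : MeasurableSpace E] (X : Ω → E) (hX : Measurable X)
    (S : ℝ) (hS : 0 < S)
    (Y T' : Ω → ℝ) (hY : Measurable Y) (hT' : Measurable T')
    (hYint : Integrable Y μ) (hT'int : Integrable T' μ)
    (r_o t_o t'_o : E → ℝ)
    (hro : Measurable r_o) (hto : Measurable t_o) (ht'o : Measurable t'_o)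
    (hroB : ∀ x, |r_o x| ≤ S)
    (htoB : ∃ C, ∀ x, |t_o x| ≤ C) (ht'oB : ∃ C, ∀ x, |t'_o x| ≤ C)
    (hYcond : μ[Y | MeasurableSpace.comap X mE] =ᵐ[μ] fun ω => r_o (X ω) * t_o (X ω))
    (hT'cond : μ[T' | MeasurableSpace.comap X mE] =ᵐ[μ] fun ω => t'_o (X ω))
    (r 𝔯 t' : E → ℝ) (hr : Measurable r) (h𝔯 : Measurable 𝔯) (ht' : Measurable t')
    (hr2 : Integrable (fun ω => (r (X ω)) ^ 2) μ)
    (h𝔯2 : Integrable (fun ω => (𝔯 (X ω)) ^ 2) μ)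
    (ht'2 : Integrable (fun ω => (t' (X ω)) ^ 2) μ)
    (hint1 : Integrable (fun ω =>
      2 * (T' ω - t'_o (X ω)) * t'_o (X ω) * (r (X ω) - r_o (X ω)) * (𝔯 (X ω) - r_o (X ω))) μ)
    (hint2 : Integrable (fun ω =>
      2 * (Y ω - t'_o (X ω) * r_o (X ω)) * (t' (X ω) - t'_o (X ω)) * (r (X ω) - r_o (X ω))) μ) :
    |(∫ ω, 2 * (T' ω - t'_o (X ω)) * t'_o (X ω) * (r (X ω) - r_o (X ω)) *
          (𝔯 (X ω) - r_o (X ω)) ∂μ) -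
      ∫ ω, 2 * (Y ω - t'_o (X ω) * r_o (X ω)) * (t' (X ω) - t'_o (X ω)) *
          (r (X ω) - r_o (X ω)) ∂μ|
      ≤ 2 * S * (essSup (fun ω => (|t_o (X ω) - t'_o (X ω)| : ℝ)) μ) *
        Real.sqrt (∫ ω, (t' (X ω) - t'_o (X ω)) ^ 2 ∂μ) *
        Real.sqrt (∫ ω, (r (X ω) - r_o (X ω)) ^ 2 ∂μ) :=
  approx_orthogonality_capped_loss_general (mE := mE) X hX S hS Y T' hYint hT'int r_o t_o t'_o hro
    ht'o hroB htoB ht'oB hYcond hT'cond r 𝔯 t' hr h𝔯 ht' hr2 ht'2 hint1 hint2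
end

section
/- (Conditional second moment of the orthogonal score.) Let a > 0. Suppose Y, T : Ω → ℝ are square-integrable random variables and y_o, t_o : E → ℝ are bounded measurable functions such that almost surely E[Y | X] = y_o(X), E[Y² | X] = 1, E[T | X] = t_o(X), E[Y·T | X] = y_o(X)·t_o(X), and such that for almost every x, t_o(x)²·(1 − y_o(x)²) + v(x)·y_o(x)² = t_o(x)³/a², where v : E → ℝ is measurable with E[(T − t_o(X))² | X] = v(X) almost surely. Then E[ ( y_o(X)·(T − t_o(X)) − t_o(X)·(Y − y_o(X)) )² ] = a^{−2}·E[ t_o(X)³ ]. -/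
/-! The score equals `y_o(X) T - t_o(X) Y`. Conditionally on `X` its second moment is
`y_o² E[T² | X] - 2 y_o t_o E[Y T | X] + t_o² E[Y² | X]`, and `E[T² | X] = v + t_o²`, which gives
`t_o² (1 - y_o²) + v y_o² = t_o³ / a²`; integrating out `X` concludes. -/

open MeasureTheory ProbabilityTheory

section ConditionalMoments

variable {Ω : Type*} {m m₀ : MeasurableSpace Ω} {μ : Measure[m₀] Ω} [IsFiniteMeasure μ]

lemma condExp_sq_ae_eq_add_sq (hm : m ≤ m₀) {T h w : Ω → ℝ} (hT : MemLp T 2 μ)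
    (hmean : μ[T | m] =ᵐ[μ] h) (hvar : μ[(T - h) ^ 2 | m] =ᵐ[μ] w) :
    μ[T ^ 2 | m] =ᵐ[μ] w + h ^ 2 := by
  have hcondVar : Var[T; μ | m] =ᵐ[μ] w :=
    (condExp_congr_ae (by filter_upwards [hmean] with ω hω; simp [hω])).trans hvar
  filter_upwards [condVar_ae_eq_condExp_sq_sub_sq_condExp hm hT, hcondVar, hmean]
    with ω hsplit hvarω hmeanω
  simp only [Pi.add_apply, Pi.sub_apply, Pi.pow_apply] at hsplit ⊢
  rw [← hmeanω, ← hvarω, hsplit]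
  ring

lemma condExp_sq_mul_sub_mul (hm : m ≤ m₀) {c d U V : Ω → ℝ} {C D : ℝ}
    (hc : StronglyMeasurable[m] c) (hd : StronglyMeasurable[m] d)
    (hcC : ∀ᵐ ω ∂μ, ‖c ω‖ ≤ C) (hdD : ∀ᵐ ω ∂μ, ‖d ω‖ ≤ D)
    (hU : MemLp U 2 μ) (hV : MemLp V 2 μ) :
    μ[(c * U - d * V) ^ 2 | m] =ᵐ[μ]
      c ^ 2 * μ[U ^ 2 | m] - 2 * c * d * μ[U * V | m] + d ^ 2 * μ[V ^ 2 | m] := by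
  have hc2 : ∀ᵐ ω ∂μ, ‖(c ^ 2) ω‖ ≤ C ^ 2 := by
    filter_upwards [hcC] with ω h
    simpa using pow_le_pow_left₀ (norm_nonneg _) h 2
  have hd2 : ∀ᵐ ω ∂μ, ‖(d ^ 2) ω‖ ≤ D ^ 2 := by
    filter_upwards [hdD] with ω h
    simpa using pow_le_pow_left₀ (norm_nonneg _) h 2
  have hcd : ∀ᵐ ω ∂μ, ‖(2 * c * d) ω‖ ≤ 2 * C * D := by
    filter_upwards [hcC, hdD] with ω h h'
    simp only [Pi.mul_apply, norm_mul, Pi.ofNat_apply, Real.norm_ofNat, mul_assoc]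
    gcongr
    exact (norm_nonneg _).trans h
  have hc2m : StronglyMeasurable[m] (c ^ 2) := hc.pow 2
  have hd2m : StronglyMeasurable[m] (d ^ 2) := hd.pow 2
  have hcdm : StronglyMeasurable[m] (2 * c * d) := (stronglyMeasurable_const.mul hc).mul hd
  have hUU : Integrable (U ^ 2) μ := hU.integrable_sq
  have hVV : Integrable (V ^ 2) μ := hV.integrable_sq
  have hUV : Integrable (U * V) μ := hU.integrable_mul hV
  have i1 : Integrable (c ^ 2 * U ^ 2) μ := hUU.bdd_mul (hc2m.mono hm).aestronglyMeasurable hc2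
  have i2 : Integrable (2 * c * d * (U * V)) μ :=
    hUV.bdd_mul (hcdm.mono hm).aestronglyMeasurable hcd
  have i3 : Integrable (d ^ 2 * V ^ 2) μ := hVV.bdd_mul (hd2m.mono hm).aestronglyMeasurable hd2
  have hexpand : (c * U - d * V) ^ 2 = c ^ 2 * U ^ 2 - 2 * c * d * (U * V) + d ^ 2 * V ^ 2 := by
    ring
  rw [hexpand]
  filter_upwards [condExp_add (i1.sub i2) i3 m, condExp_sub i1 i2 m,
    condExp_stronglyMeasurable_mul_of_bound hm hc2m hUU _ hc2,
    condExp_stronglyMeasurable_mul_of_bound hm hcdm hUV _ hcd,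
    condExp_stronglyMeasurable_mul_of_bound hm hd2m hVV _ hd2] with ω h h' e1 e2 e3
  simp only [Pi.add_apply, Pi.sub_apply] at h h' ⊢
  rw [h, h', e1, e2, e3]

end ConditionalMoments

theorem ortho_score_second_moment_general
    {Ω : Type*} [MeasurableSpace Ω] {μ : Measure Ω} [IsProbabilityMeasure μ]
    {E : Type*} [mE : MeasurableSpace E] (X : Ω → E) (hX : Measurable X)
    (a : ℝ)
    (Y T : Ω → ℝ)
    (hY2 : MemLp Y 2 μ) (hT2 : MemLp T 2 μ)
    (y_o t_o v : E → ℝ) (hyo : Measurable y_o) (hto : Measurable t_o)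
    (hyoB : ∃ C, ∀ x, |y_o x| ≤ C) (htoB : ∃ C, ∀ x, |t_o x| ≤ C)
    (hY2cond : μ[(fun ω => (Y ω) ^ 2) | MeasurableSpace.comap X mE] =ᵐ[μ] fun _ => (1 : ℝ))
    (hTcond : μ[T | MeasurableSpace.comap X mE] =ᵐ[μ] fun ω => t_o (X ω))
    (hYTcond : μ[(fun ω => Y ω * T ω) | MeasurableSpace.comap X mE] =ᵐ[μ]
      fun ω => y_o (X ω) * t_o (X ω))
    (hvcond : μ[(fun ω => (T ω - t_o (X ω)) ^ 2) | MeasurableSpace.comap X mE] =ᵐ[μ]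
      fun ω => v (X ω))
    (hident : ∀ᵐ ω ∂μ,
      (t_o (X ω)) ^ 2 * (1 - (y_o (X ω)) ^ 2) + v (X ω) * (y_o (X ω)) ^ 2
        = (t_o (X ω)) ^ 3 / a ^ 2) :
    ∫ ω, (y_o (X ω) * (T ω - t_o (X ω)) - t_o (X ω) * (Y ω - y_o (X ω))) ^ 2 ∂μ
      = a⁻¹ ^ 2 * ∫ ω, (t_o (X ω)) ^ 3 ∂μ := by
  obtain ⟨Cy, hCy⟩ := hyoB
  obtain ⟨Ct, hCt⟩ := htoB
  set m := MeasurableSpace.comap X mE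
  set g : Ω → ℝ := fun ω => y_o (X ω)
  set h : Ω → ℝ := fun ω => t_o (X ω)
  have hm : m ≤ _ := hX.comap_le
  have hXm : Measurable[m] X := Measurable.of_comap_le le_rfl
  have hTT : μ[T ^ 2 | m] =ᵐ[μ] (fun ω => v (X ω)) + h ^ 2 :=
    condExp_sq_ae_eq_add_sq hm hT2 hTcond hvcond
  have hTY : μ[T * Y | m] =ᵐ[μ] g * h := by rw [mul_comm T]; exact hYTcond
  have hYY : μ[Y ^ 2 | m] =ᵐ[μ] 1 := hY2cond
  have hscore : μ[(g * T - h * Y) ^ 2 | m] =ᵐ[μ] fun ω => h ω ^ 3 / a ^ 2 := by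
    filter_upwards [condExp_sq_mul_sub_mul hm (c := g) (hyo.comp hXm).stronglyMeasurable
      (d := h) (hto.comp hXm).stronglyMeasurable (.of_forall fun ω => hCy (X ω))
      (.of_forall fun ω => hCt (X ω)) hT2 hY2, hTT, hTY, hYY, hident]
      with ω hsq hT hYT hY hid
    simp only [Pi.add_apply, Pi.sub_apply, Pi.mul_apply, Pi.pow_apply, Pi.ofNat_apply]
      at hsq hT hYT hY ⊢
    rw [hsq, hT, hYT, hY]
    linear_combination hid
  calc ∫ ω, (g ω * (T ω - h ω) - h ω * (Y ω - g ω)) ^ 2 ∂μ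
      = ∫ ω, ((g * T - h * Y) ^ 2) ω ∂μ := by
        congr with ω
        simp only [Pi.pow_apply, Pi.sub_apply, Pi.mul_apply]
        ring
    _ = ∫ ω, h ω ^ 3 / a ^ 2 ∂μ := (integral_condExp hm).symm.trans (integral_congr_ae hscore)
    _ = a⁻¹ ^ 2 * ∫ ω, h ω ^ 3 ∂μ := by rw [integral_div, div_eq_mul_inv, ← inv_pow, mul_comm]

/-- **Conditional second moment of the orthogonal score.**
Under the conditional moment conditions `E[Y|X] = y_o(X)`, `E[Y²|X] = 1`, `E[T|X] = t_o(X)`,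
`E[YT|X] = y_o(X) t_o(X)`, `E[(T - t_o(X))²|X] = v(X)`, together with the pointwise identity
`t_o²(1 - y_o²) + v y_o² = t_o³/a²` (a.e.), one has
`E[(y_o(X)(T - t_o(X)) - t_o(X)(Y - y_o(X)))²] = a⁻² E[t_o(X)³]`. -/
theorem ortho_score_second_moment
    {Ω : Type*} [MeasurableSpace Ω] {μ : Measure Ω} [IsProbabilityMeasure μ]
    {E : Type*} [mE : MeasurableSpace E] (X : Ω → E) (hX : Measurable X)
    (a : ℝ) (ha : 0 < a)
    (Y T : Ω → ℝ) (hY : Measurable Y) (hT : Measurable T)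
    (hY2 : MemLp Y 2 μ) (hT2 : MemLp T 2 μ)
    (y_o t_o v : E → ℝ) (hyo : Measurable y_o) (hto : Measurable t_o) (hv : Measurable v)
    (hyoB : ∃ C, ∀ x, |y_o x| ≤ C) (htoB : ∃ C, ∀ x, |t_o x| ≤ C)
    (hYcond : μ[Y | MeasurableSpace.comap X mE] =ᵐ[μ] fun ω => y_o (X ω))
    (hY2cond : μ[(fun ω => (Y ω) ^ 2) | MeasurableSpace.comap X mE] =ᵐ[μ] fun _ => (1 : ℝ))
    (hTcond : μ[T | MeasurableSpace.comap X mE] =ᵐ[μ] fun ω => t_o (X ω))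
    (hYTcond : μ[(fun ω => Y ω * T ω) | MeasurableSpace.comap X mE] =ᵐ[μ]
      fun ω => y_o (X ω) * t_o (X ω))
    (hvcond : μ[(fun ω => (T ω - t_o (X ω)) ^ 2) | MeasurableSpace.comap X mE] =ᵐ[μ]
      fun ω => v (X ω))
    (hident : ∀ᵐ ω ∂μ,
      (t_o (X ω)) ^ 2 * (1 - (y_o (X ω)) ^ 2) + v (X ω) * (y_o (X ω)) ^ 2
        = (t_o (X ω)) ^ 3 / a ^ 2) :
    ∫ ω, (y_o (X ω) * (T ω - t_o (X ω)) - t_o (X ω) * (Y ω - y_o (X ω))) ^ 2 ∂μ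
      = a⁻¹ ^ 2 * ∫ ω, (t_o (X ω)) ^ 3 ∂μ :=
  ortho_score_second_moment_general (mE := mE) X hX a Y T hY2 hT2 y_o t_o v hyo hto hyoB htoB
    hY2cond hTcond hYTcond hvcond hident
end
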